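/- arXiv:2205.04647 — 2 statements merged into one kernel-verified Lean document; each statement's English description precedes it below -/
import Mathlib

section
/- For any real numbers $x, y$ and real exponents $p, q$ with $0 < p < 1$ and $q > 1$, it holds that $|\lceil x\rfloor^{pq} - \lceil y\rfloor^{pq}| \le 2^{1-p} |\lceil x\rfloor^{q} - \lceil y\rfloor^{q}|^{p}$. -/
open scoped NNReal

noncomputable def spow (a b : ℝ) : ℝ := Real.sign a * |a| ^ b

lemma spow_of_nonneg {a : ℝ} (b : ℝ) (ha : 0 ≤ a) (hb : b ≠ 0) : spow a b = a ^ b := by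
  rcases eq_or_lt_of_le ha with h | h
  · simp [spow, ← h, Real.sign_zero, Real.zero_rpow hb]
  · simp [spow, Real.sign_of_pos h, abs_of_pos h]

lemma spow_neg (a b : ℝ) : spow (-a) b = - spow a b := by
  simp [spow, Real.sign_neg, abs_neg]

lemma nn_subadd {p : ℝ} (hp0 : 0 < p) (hp1 : p ≤ 1) (a b : ℝ) (ha : 0 ≤ a) (hb : 0 ≤ b) :
    (a + b) ^ p ≤ a ^ p + b ^ p := by
  lift a to ℝ≥0 using ha
  lift b to ℝ≥0 using hb
  have := NNReal.rpow_add_le_add_rpow a b hp0.le hp1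
  exact_mod_cast this

lemma nn_conc {p : ℝ} (hp0 : 0 < p) (hp1 : p ≤ 1) (a b : ℝ≥0) :
    a ^ p + b ^ p ≤ 2 ^ (1 - p) * (a + b) ^ p := by
  have h1p : 1 ≤ 1 / p := by rw [le_div_iff₀ hp0]; linarith
  have key := NNReal.rpow_add_le_mul_rpow_add_rpow (a ^ p) (b ^ p) h1p
  have hap : (a ^ p) ^ (1 / p) = a := by
    rw [← NNReal.rpow_mul, mul_one_div_cancel hp0.ne', NNReal.rpow_one]
  have hbp : (b ^ p) ^ (1 / p) = b := by
    rw [← NNReal.rpow_mul, mul_one_div_cancel hp0.ne', NNReal.rpow_one]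
  rw [hap, hbp] at key
  have key2 := NNReal.rpow_le_rpow key hp0.le
  rw [← NNReal.rpow_mul, one_div_mul_cancel hp0.ne', NNReal.rpow_one,
    NNReal.mul_rpow, ← NNReal.rpow_mul] at key2
  have : (1 / p - 1) * p = 1 - p := by field_simp
  rwa [this] at key2

lemma conc {p : ℝ} (hp0 : 0 < p) (hp1 : p ≤ 1) (a b : ℝ) (ha : 0 ≤ a) (hb : 0 ≤ b) :
    a ^ p + b ^ p ≤ 2 ^ (1 - p) * (a + b) ^ p := by
  lift a to ℝ≥0 using ha
  lift b to ℝ≥0 using hb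
  exact_mod_cast nn_conc hp0 hp1 a b

lemma key_nonneg {p : ℝ} (hp0 : 0 < p) (hp1 : p < 1) {u v : ℝ} (hv : 0 ≤ v) (huv : v ≤ u) :
    |spow u p - spow v p| ≤ 2 ^ (1 - p) * |u - v| ^ p := by
  have hpne : p ≠ 0 := hp0.ne'
  have hu : 0 ≤ u := hv.trans huv
  have h2 : (1:ℝ) ≤ 2 ^ (1 - p) := by
    calc (1:ℝ) = 2 ^ (0:ℝ) := by simp
    _ ≤ 2 ^ (1 - p) := by
        apply (Real.rpow_le_rpow_left_iff (x := 2) one_lt_two).2; linarith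
  rw [spow_of_nonneg p hu hpne, spow_of_nonneg p hv hpne]
  have hmono : v ^ p ≤ u ^ p := Real.rpow_le_rpow hv huv hp0.le
  rw [abs_of_nonneg (by linarith), abs_of_nonneg (by linarith)]
  have h1 : u ^ p ≤ (u - v) ^ p + v ^ p := by
    have := nn_subadd hp0 hp1.le (u - v) v (by linarith) hv
    rw [sub_add_cancel] at this
    linarith
  nlinarith [Real.rpow_nonneg (show (0:ℝ) ≤ u - v by linarith) p]

lemma key_ineq {p : ℝ} (hp0 : 0 < p) (hp1 : p < 1) (u v : ℝ) (huv : v ≤ u) :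
    |spow u p - spow v p| ≤ 2 ^ (1 - p) * |u - v| ^ p := by
  have hpne : p ≠ 0 := hp0.ne'
  rcases le_or_gt 0 v with hv | hv
  · exact key_nonneg hp0 hp1 hv huv
  rcases le_or_gt u 0 with hu | hu
  · -- v ≤ u ≤ 0
    have := key_nonneg hp0 hp1 (u := -v) (v := -u) (by linarith) (by linarith)
    rw [spow_neg, spow_neg] at this
    rw [show -spow v p - -spow u p = spow u p - spow v p by ring,
      show -v - -u = u - v by ring] at this
    exact this
  · -- v < 0 < u
    have hsv : spow v p = - ((-v) ^ p) := by
      rw [show v = -(-v) by ring, spow_neg, spow_of_nonneg p (by linarith) hpne]; ring_nf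
    rw [spow_of_nonneg p hu.le hpne, hsv]
    have hc := conc hp0 hp1.le u (-v) hu.le (by linarith)
    have hnn1 : 0 ≤ u ^ p := Real.rpow_nonneg hu.le p
    have hnn2 : 0 ≤ (-v) ^ p := Real.rpow_nonneg (by linarith) p
    rw [abs_of_nonneg (by linarith), abs_of_nonneg (by linarith)]
    have : u + -v = u - v := by ring
    rw [this] at hc
    linarith

lemma spow_spow (x q p : ℝ) (hq : 0 < q) (hp : p ≠ 0) :
    spow (spow x q) p = spow x (p * q) := by
  rcases lt_trichotomy x 0 with h | h | h
  · have h1 : spow x q = -(|x| ^ q) := by simp [spow, Real.sign_of_neg h]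
    have hpos : 0 < |x| ^ q := Real.rpow_pos_of_pos (abs_pos.2 h.ne) q
    rw [h1, show -(|x| ^ q) = -(|x| ^ q) from rfl, spow_neg, spow_of_nonneg p hpos.le hp,
      ← Real.rpow_mul (abs_nonneg x)]
    simp [spow, Real.sign_of_neg h, mul_comm q p]
  · simp [h, spow, Real.sign_zero, Real.zero_rpow (mul_ne_zero hp hq.ne'), abs_zero,
      Real.zero_rpow hp]
  · have h1 : spow x q = |x| ^ q := by simp [spow, Real.sign_of_pos h]
    have hpos : 0 < |x| ^ q := Real.rpow_pos_of_pos (abs_pos.2 h.ne') q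
    rw [h1, spow_of_nonneg p hpos.le hp, ← Real.rpow_mul (abs_nonneg x)]
    simp [spow, Real.sign_of_pos h, mul_comm q p]

theorem stmt_0 (x y p q : ℝ) (hp0 : 0 < p) (hp1 : p < 1) (hq : 1 < q) :
    |spow x (p * q) - spow y (p * q)| ≤ 2 ^ (1 - p) * |spow x q - spow y q| ^ p := by
  rw [← spow_spow x q p (by linarith) hp0.ne', ← spow_spow y q p (by linarith) hp0.ne']
  rcases le_total (spow y q) (spow x q) with h | h
  · exact key_ineq hp0 hp1 _ _ h
  · have := key_ineq hp0 hp1 _ _ h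
    rwa [abs_sub_comm, abs_sub_comm (spow y q)] at this
end

section
/- Let $a > 0$, $0 < b_1 < 1$, $b_2 > 1$ be real constants with $a - a b_1 - 1 > 0$, and define $\beta(s) = a s^{b_1} + \frac{a - a b_1}{(a - a b_1 - 1)(b_2 - 1)} s^{b_2}$ for $s \ge 0$. Then $\beta$ is nonnegative and nondecreasing on $[0,\infty)$, $\beta(s) > 0$ for $s > 0$, and $\int_0^\infty \frac{1}{\beta(s)}\, ds \le 1$. -/
open MeasureTheory

theorem stmt_5 (a b₁ b₂ : ℝ) (ha : 0 < a) (hb₁ : 0 < b₁) (hb₁' : b₁ < 1) (hb₂ : 1 < b₂)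
    (hcond : 0 < a - a * b₁ - 1)
    (β : ℝ → ℝ)
    (hβ : ∀ s, β s = a * s ^ b₁ + (a - a * b₁) / ((a - a * b₁ - 1) * (b₂ - 1)) * s ^ b₂) :
    (∀ s, 0 ≤ s → 0 ≤ β s) ∧ MonotoneOn β (Set.Ici 0) ∧ (∀ s, 0 < s → 0 < β s) ∧
      ∫⁻ s in Set.Ioi (0 : ℝ), ENNReal.ofReal (1 / β s) ≤ 1 := by
  set c : ℝ := (a - a * b₁) / ((a - a * b₁ - 1) * (b₂ - 1)) with hc_def
  have hA : (0:ℝ) < a - a * b₁ := by nlinarith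
  have hc : 0 < c := div_pos hA (mul_pos hcond (by linarith))
  have hnn : ∀ s, 0 ≤ s → 0 ≤ β s := by
    intro s hs
    rw [hβ]
    have h1 := Real.rpow_nonneg hs b₁
    have h2 := Real.rpow_nonneg hs b₂
    positivity
  have hpos : ∀ s, 0 < s → 0 < β s := by
    intro s hs
    rw [hβ]
    have h1 := Real.rpow_pos_of_pos hs b₁
    have h2 := Real.rpow_nonneg hs.le b₂
    positivity
  refine ⟨hnn, ?_, hpos, ?_⟩
  · intro x hx y hy hxy
    rw [hβ, hβ]
    exact add_le_add (mul_le_mul_of_nonneg_left (Real.rpow_le_rpow hx hxy hb₁.le) ha.le)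
      (mul_le_mul_of_nonneg_left (Real.rpow_le_rpow hx hxy (by linarith)) hc.le)
  · have hsplit : Set.Ioi (0:ℝ) = Set.Ioc 0 1 ∪ Set.Ioi 1 :=
      (Set.Ioc_union_Ioi_eq_Ioi zero_le_one).symm
    rw [hsplit, lintegral_union measurableSet_Ioi (Set.Ioc_disjoint_Ioi le_rfl)]
    have hI1 : ∫⁻ s in Set.Ioc (0:ℝ) 1, ENNReal.ofReal (1 / β s) ≤
        ENNReal.ofReal (a⁻¹ * (1 - b₁)⁻¹) := by
      have hle : ∫⁻ s in Set.Ioc (0:ℝ) 1, ENNReal.ofReal (1 / β s) ≤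
          ∫⁻ s in Set.Ioc (0:ℝ) 1, ENNReal.ofReal (a⁻¹ * s ^ (-b₁)) := by
        refine setLIntegral_mono' measurableSet_Ioc fun s hs => ?_
        apply ENNReal.ofReal_le_ofReal
        have hs0 : 0 < s := hs.1
        have hb : 0 < a * s ^ b₁ := mul_pos ha (Real.rpow_pos_of_pos hs0 b₁)
        have hβs : a * s ^ b₁ ≤ β s := by
          rw [hβ]
          have := mul_nonneg hc.le (Real.rpow_nonneg hs0.le b₂)
          linarith
        calc 1 / β s ≤ 1 / (a * s ^ b₁) := by
              apply one_div_le_one_div_of_le hb hβs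
          _ = a⁻¹ * s ^ (-b₁) := by
              rw [Real.rpow_neg hs0.le, one_div, mul_inv]
      have hint : IntegrableOn (fun s : ℝ => a⁻¹ * s ^ (-b₁)) (Set.Ioc (0:ℝ) 1) := by
        have := (intervalIntegral.intervalIntegrable_rpow' (a := 0) (b := 1) (show (-1:ℝ) < -b₁ by linarith))
        rw [intervalIntegrable_iff_integrableOn_Ioc_of_le zero_le_one] at this
        exact this.const_mul _
      have heq : ∫⁻ s in Set.Ioc (0:ℝ) 1, ENNReal.ofReal (a⁻¹ * s ^ (-b₁)) =
          ENNReal.ofReal (∫ s in Set.Ioc (0:ℝ) 1, a⁻¹ * s ^ (-b₁)) := by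
        rw [ofReal_integral_eq_lintegral_ofReal hint]
        filter_upwards [ae_restrict_mem measurableSet_Ioc] with s hs
        exact mul_nonneg (inv_nonneg.mpr ha.le) (Real.rpow_nonneg hs.1.le _)
      have hval : ∫ s in Set.Ioc (0:ℝ) 1, a⁻¹ * s ^ (-b₁) = a⁻¹ * (1 - b₁)⁻¹ := by
        rw [integral_const_mul, ← intervalIntegral.integral_of_le zero_le_one,
          integral_rpow (Or.inl (by linarith : (-1:ℝ) < -b₁))]
        rw [Real.one_rpow, Real.zero_rpow (by linarith : -b₁ + 1 ≠ 0)]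
        ring_nf
      calc ∫⁻ s in Set.Ioc (0:ℝ) 1, ENNReal.ofReal (1 / β s)
          ≤ ∫⁻ s in Set.Ioc (0:ℝ) 1, ENNReal.ofReal (a⁻¹ * s ^ (-b₁)) := hle
        _ = ENNReal.ofReal (a⁻¹ * (1 - b₁)⁻¹) := by rw [heq, hval]
    have hI2 : ∫⁻ s in Set.Ioi (1:ℝ), ENNReal.ofReal (1 / β s) ≤
        ENNReal.ofReal (c⁻¹ * (b₂ - 1)⁻¹) := by
      have hle : ∫⁻ s in Set.Ioi (1:ℝ), ENNReal.ofReal (1 / β s) ≤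
          ∫⁻ s in Set.Ioi (1:ℝ), ENNReal.ofReal (c⁻¹ * s ^ (-b₂)) := by
        refine setLIntegral_mono' measurableSet_Ioi fun s hs => ?_
        apply ENNReal.ofReal_le_ofReal
        have hs0 : (0:ℝ) < s := lt_trans zero_lt_one hs
        have hb : 0 < c * s ^ b₂ := mul_pos hc (Real.rpow_pos_of_pos hs0 b₂)
        have hβs : c * s ^ b₂ ≤ β s := by
          rw [hβ]
          have := mul_nonneg ha.le (Real.rpow_nonneg hs0.le b₁)
          linarith
        calc 1 / β s ≤ 1 / (c * s ^ b₂) := by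
              apply one_div_le_one_div_of_le hb hβs
          _ = c⁻¹ * s ^ (-b₂) := by
              rw [Real.rpow_neg hs0.le, one_div, mul_inv]
      have hint : IntegrableOn (fun s : ℝ => s ^ (-b₂)) (Set.Ioi (1:ℝ)) :=
        integrableOn_Ioi_rpow_of_lt (by linarith) zero_lt_one
      have heq : ∫⁻ s in Set.Ioi (1:ℝ), ENNReal.ofReal (c⁻¹ * s ^ (-b₂)) =
          ENNReal.ofReal (∫ s in Set.Ioi (1:ℝ), c⁻¹ * s ^ (-b₂)) := by
        rw [ofReal_integral_eq_lintegral_ofReal (hint.const_mul _)]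
        filter_upwards [ae_restrict_mem measurableSet_Ioi] with s hs
        exact mul_nonneg (inv_nonneg.mpr hc.le) (Real.rpow_nonneg (by linarith [Set.mem_Ioi.mp hs] : (0:ℝ) ≤ s) _)
      have hval : ∫ s in Set.Ioi (1:ℝ), c⁻¹ * s ^ (-b₂) = c⁻¹ * (b₂ - 1)⁻¹ := by
        rw [integral_const_mul, integral_Ioi_rpow_of_lt (by linarith : -b₂ < -1) zero_lt_one]
        rw [Real.one_rpow]
        congr 1
        rw [eq_comm, inv_eq_one_div, div_eq_div_iff (by linarith) (by linarith)]
        ring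
      calc ∫⁻ s in Set.Ioi (1:ℝ), ENNReal.ofReal (1 / β s)
          ≤ ∫⁻ s in Set.Ioi (1:ℝ), ENNReal.ofReal (c⁻¹ * s ^ (-b₂)) := hle
        _ = ENNReal.ofReal (c⁻¹ * (b₂ - 1)⁻¹) := by rw [heq, hval]
    have hx : (0:ℝ) ≤ a⁻¹ * (1 - b₁)⁻¹ :=
      mul_nonneg (inv_nonneg.mpr ha.le) (inv_nonneg.mpr (by linarith))
    have hsum : a⁻¹ * (1 - b₁)⁻¹ + c⁻¹ * (b₂ - 1)⁻¹ = 1 := by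
      have h1 : a ≠ 0 := ha.ne'
      have h2 : (1:ℝ) - b₁ ≠ 0 := by linarith
      have h3 : b₂ - 1 ≠ 0 := by linarith
      have h4 : a - a * b₁ ≠ 0 := hA.ne'
      have h5 : a - a * b₁ - 1 ≠ 0 := hcond.ne'
      rw [hc_def]
      field_simp
      ring
    calc (∫⁻ s in Set.Ioc (0:ℝ) 1, ENNReal.ofReal (1 / β s)) +
          ∫⁻ s in Set.Ioi (1:ℝ), ENNReal.ofReal (1 / β s)
        ≤ ENNReal.ofReal (a⁻¹ * (1 - b₁)⁻¹) + ENNReal.ofReal (c⁻¹ * (b₂ - 1)⁻¹) :=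
          add_le_add hI1 hI2
      _ = ENNReal.ofReal (a⁻¹ * (1 - b₁)⁻¹ + c⁻¹ * (b₂ - 1)⁻¹) :=
          (ENNReal.ofReal_add hx (mul_nonneg (inv_nonneg.mpr hc.le)
            (inv_nonneg.mpr (by linarith)))).symm
      _ = 1 := by rw [hsum, ENNReal.ofReal_one]
end
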